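/- For the Legendre scaling functions φ_j(x) = √(2j+1) P_j(2x−1) on (0,1) (zero elsewhere), the Fourier transforms satisfy the recursion F φ_{j+1}(ξ) = √((2j+3)/(2j−1)) · F φ_{j−1}(ξ) + (2√((2j+1)(2j+3))/(iξ)) · F φ_j(ξ) for all j ≥ 1 and ξ ≠ 0. -/

import Mathlib

/-!
Two derivatives of `(X² - 1)ⁿ⁺²` in the Rodrigues formula give
`(2n+3) P_{n+1} = (P_{n+2} - P_n)'`. Since `P_k(1) = 1` and `P_k(-1) = (-1)ᵏ`, the polynomial
`P_{n+2} - P_n` vanishes at `±1`, so integrating by parts against `e^{-iξx}` over `(0,1)`, where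
`2x - 1` runs over `(-1,1)`, has no boundary terms and turns the derivative into a factor `iξ/2`.
The square roots only renormalise the resulting recursion for `∫₀¹ P_k(2x-1) e^{-iξx} dx` into
one for `φ_k`.
-/

open MeasureTheory Polynomial

/-- The `j`-th Legendre polynomial, via the Rodrigues formula. -/
noncomputable def legendre (j : ℕ) : Polynomial ℝ :=
  Polynomial.C (1 / (2^j * (j.factorial : ℝ))) *
    (Polynomial.derivative^[j] ((Polynomial.X^2 - 1)^j))

/-- The Legendre scaling function `φ_j(x) = √(2j+1)·P_j(2x−1)` on (0,1), 0 elsewhere. -/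
noncomputable def phi (j : ℕ) : ℝ → ℝ := fun x =>
  if x ∈ Set.Ioo (0:ℝ) 1 then Real.sqrt (2*j+1) * (legendre j).eval (2*x - 1) else 0

/-- The Fourier transform `F f ξ = ∫ f(x) e^{-iξx} dx`. -/
noncomputable def fourierT (f : ℝ → ℝ) (ξ : ℝ) : ℂ :=
  ∫ x : ℝ, (f x : ℂ) * Complex.exp (-Complex.I * ξ * x)

open Complex

theorem derivative_X_sq_sub_one_pow_succ (m : ℕ) :
    derivative ((X ^ 2 - 1 : ℝ[X]) ^ (m + 1))
      = C (2 * ((m : ℝ) + 1)) * X * (X ^ 2 - 1) ^ m := by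
  rw [derivative_pow, derivative_sub, derivative_X_pow, derivative_one]
  simp only [map_mul, map_add, map_ofNat, map_natCast, map_one, Nat.cast_add, Nat.cast_one,
    Nat.add_sub_cancel, sub_zero, Nat.cast_ofNat]
  ring

/-- The factor `X²` produced by the second derivative is absorbed by
`X² (X² - 1)ⁿ = (X² - 1)ⁿ⁺¹ + (X² - 1)ⁿ`. -/
theorem derivative_derivative_X_sq_sub_one_pow (n : ℕ) :
    derivative (derivative ((X ^ 2 - 1 : ℝ[X]) ^ (n + 2)))
      = C (2 * ((n : ℝ) + 2) * (2 * n + 3)) * (X ^ 2 - 1) ^ (n + 1)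
        + C (4 * ((n : ℝ) + 1) * (n + 2)) * (X ^ 2 - 1) ^ n := by
  rw [derivative_X_sq_sub_one_pow_succ, derivative_mul, derivative_mul, derivative_C,
    derivative_X, derivative_X_sq_sub_one_pow_succ]
  simp only [map_mul, map_add, map_ofNat, map_natCast, map_one, Nat.cast_add, Nat.cast_one,
    zero_mul, zero_add, mul_one]
  ring

theorem legendre_eq_C_mul_iterate_derivative (n : ℕ) :
    legendre n = C (2 ^ n * (n.factorial : ℝ))⁻¹ * derivative^[n] ((X ^ 2 - 1) ^ n) := by
  rw [legendre, one_div]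

theorem derivative_legendre_add_two (n : ℕ) :
    derivative (legendre (n + 2))
      = derivative (legendre n) + C (2 * (n : ℝ) + 3) * legendre (n + 1) := by
  have hscale₀ : (2 ^ (n + 2) * ((n + 2).factorial : ℝ))⁻¹ * (4 * (n + 1) * (n + 2))
      = (2 ^ n * (n.factorial : ℝ))⁻¹ := by
    simp only [Nat.factorial_succ, Nat.cast_mul, pow_succ]
    push_cast
    field_simp
    ring
  have hscale₁ : (2 ^ (n + 2) * ((n + 2).factorial : ℝ))⁻¹ * (2 * (n + 2) * (2 * n + 3))
      = (2 * n + 3) * (2 ^ (n + 1) * ((n + 1).factorial : ℝ))⁻¹ := by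
    simp only [Nat.factorial_succ, Nat.cast_mul, pow_succ]
    push_cast
    field_simp
    ring
  simp only [legendre_eq_C_mul_iterate_derivative, derivative_C_mul,
    ← Function.iterate_succ_apply' derivative]
  rw [Function.iterate_succ_apply, Function.iterate_succ_apply,
    derivative_derivative_X_sq_sub_one_pow, iterate_map_add, iterate_derivative_C_mul,
    iterate_derivative_C_mul, mul_add, ← mul_assoc, ← mul_assoc, ← mul_assoc, ← map_mul,
    ← map_mul, ← map_mul, hscale₀, hscale₁]
  ring

theorem eval_iterate_derivative_X_sq_sub_one_pow (n : ℕ) {r : ℝ} (hr : r ^ 2 = 1) :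
    (derivative^[n] ((X ^ 2 - 1 : ℝ[X]) ^ n)).eval r = n.factorial * (2 * r) ^ n := by
  have hfactor : (X ^ 2 - 1 : ℝ[X]) ^ n = (X - C r) ^ n * (X + C r) ^ n := by
    rw [← mul_pow, ← C_1, ← hr, C_pow]
    ring
  have hleibniz := aeval_iterate_derivative_self ((X ^ 2 - 1 : ℝ[X]) ^ n) n r
    (p' := (X + C r) ^ n) (by rw [Algebra.algebraMap_self, map_id, hfactor])
  rw [coe_aeval_eq_eval] at hleibniz
  rw [hleibniz, nsmul_eq_mul]
  simp [two_mul]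

theorem legendre_eval_one (n : ℕ) : (legendre n).eval 1 = 1 := by
  rw [legendre_eq_C_mul_iterate_derivative, eval_mul, eval_C,
    eval_iterate_derivative_X_sq_sub_one_pow n (one_pow 2)]
  field_simp

theorem legendre_eval_neg_one (n : ℕ) : (legendre n).eval (-1) = (-1) ^ n := by
  rw [legendre_eq_C_mul_iterate_derivative, eval_mul, eval_C,
    eval_iterate_derivative_X_sq_sub_one_pow n (by norm_num)]
  field_simp
  rw [neg_pow, mul_comm]

theorem hasDerivAt_cexp_const_mul_ofReal (c : ℂ) (x : ℝ) :
    HasDerivAt (fun y : ℝ => cexp (c * y)) (c * cexp (c * x)) x := by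
  simpa [mul_comm] using ((hasDerivAt_id x).ofReal_comp.const_mul c).cexp

theorem integral_deriv_mul_cexp_of_eq_zero {u u' : ℝ → ℂ} {a b : ℝ} (c : ℂ)
    (hu : ∀ x ∈ Set.uIcc a b, HasDerivAt u (u' x) x) (hu' : IntervalIntegrable u' volume a b)
    (ha : u a = 0) (hb : u b = 0) :
    ∫ x in a..b, u' x * cexp (c * x) = -c * ∫ x in a..b, u x * cexp (c * x) := by
  have hparts := intervalIntegral.integral_mul_deriv_eq_deriv_mul hu
    (fun x _ => hasDerivAt_cexp_const_mul_ofReal c x) hu'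
    (by apply Continuous.intervalIntegrable; fun_prop)
  simp only [ha, hb, zero_mul, sub_zero, zero_sub, mul_left_comm _ c,
    intervalIntegral.integral_const_mul] at hparts
  linear_combination hparts

noncomputable def fourierIntegralUnitInterval (p : ℝ[X]) (ξ : ℝ) : ℂ :=
  ∫ x in (0 : ℝ)..1, ((p.eval (2 * x - 1) : ℝ) : ℂ) * cexp (-I * ξ * x)

theorem intervalIntegrable_eval_mul_cexp (p : ℝ[X]) (ξ : ℝ) (a b : ℝ) :
    IntervalIntegrable (fun x : ℝ => ((p.eval (2 * x - 1) : ℝ) : ℂ) * cexp (-I * ξ * x))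
      volume a b := by
  apply Continuous.intervalIntegrable
  fun_prop

theorem fourierIntegralUnitInterval_sub (p q : ℝ[X]) (ξ : ℝ) :
    fourierIntegralUnitInterval (p - q) ξ
      = fourierIntegralUnitInterval p ξ - fourierIntegralUnitInterval q ξ := by
  rw [fourierIntegralUnitInterval, fourierIntegralUnitInterval, fourierIntegralUnitInterval,
    ← intervalIntegral.integral_sub (intervalIntegrable_eval_mul_cexp p ξ 0 1)
      (intervalIntegrable_eval_mul_cexp q ξ 0 1)]
  simp only [eval_sub, ofReal_sub, sub_mul]

theorem fourierIntegralUnitInterval_C_mul (c : ℝ) (p : ℝ[X]) (ξ : ℝ) :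
    fourierIntegralUnitInterval (C c * p) ξ = c * fourierIntegralUnitInterval p ξ := by
  rw [fourierIntegralUnitInterval, fourierIntegralUnitInterval,
    ← intervalIntegral.integral_const_mul]
  simp only [eval_mul, eval_C, ofReal_mul, mul_assoc]

theorem fourierIntegralUnitInterval_derivative {p : ℝ[X]} (hp₀ : p.eval (-1) = 0)
    (hp₁ : p.eval 1 = 0) (ξ : ℝ) :
    2 * fourierIntegralUnitInterval (derivative p) ξ
      = I * ξ * fourierIntegralUnitInterval p ξ := by
  have hu (x : ℝ) : HasDerivAt (fun y : ℝ => ((p.eval (2 * y - 1) : ℝ) : ℂ))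
      (((derivative p).eval (2 * x - 1) * 2 : ℝ) : ℂ) x :=
    ((p.hasDerivAt _).comp x (((hasDerivAt_id x).const_mul 2).sub_const 1 |>.congr_deriv
      (by simp))).ofReal_comp
  rw [fourierIntegralUnitInterval, fourierIntegralUnitInterval,
    ← intervalIntegral.integral_const_mul, ← neg_neg (I * ξ), ← neg_mul,
    ← integral_deriv_mul_cexp_of_eq_zero _ (fun x _ => hu x)
      (by apply Continuous.intervalIntegrable; fun_prop)
      (by norm_num [hp₀]) (by norm_num [hp₁])]
  congr 1 with x
  push_cast
  ring

theorem fourierT_indicator_Ioo {a b : ℝ} (hab : a ≤ b) (f : ℝ → ℝ) (ξ : ℝ) :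
    fourierT ((Set.Ioo a b).indicator f) ξ
      = ∫ x in a..b, (f x : ℂ) * cexp (-I * ξ * x) := by
  have hpointwise (x : ℝ) : (((Set.Ioo a b).indicator f x : ℝ) : ℂ) * cexp (-I * ξ * x)
      = (Set.Ioo a b).indicator (fun x => (f x : ℂ) * cexp (-I * ξ * x)) x := by
    by_cases hx : x ∈ Set.Ioo a b <;> simp [hx]
  simp only [fourierT, hpointwise]
  rw [integral_indicator measurableSet_Ioo, ← integral_Ioc_eq_integral_Ioo,
    intervalIntegral.integral_of_le hab]

theorem fourierT_phi (m : ℕ) (ξ : ℝ) :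
    fourierT (phi m) ξ = Real.sqrt (2 * m + 1) * fourierIntegralUnitInterval (legendre m) ξ := by
  have hphi : phi m = (Set.Ioo 0 1).indicator
      (fun x => Real.sqrt (2 * m + 1) * (legendre m).eval (2 * x - 1)) := by
    ext x
    simp only [phi, Set.indicator_apply]
  rw [hphi, fourierT_indicator_Ioo zero_le_one, fourierIntegralUnitInterval,
    ← intervalIntegral.integral_const_mul]
  simp only [ofReal_mul, mul_assoc]

theorem fourierIntegralUnitInterval_legendre_add_two (n : ℕ) {ξ : ℝ} (hξ : ξ ≠ 0) :
    fourierIntegralUnitInterval (legendre (n + 2)) ξ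
      = fourierIntegralUnitInterval (legendre n) ξ
        + 2 * (2 * n + 3) / (I * ξ) * fourierIntegralUnitInterval (legendre (n + 1)) ξ := by
  have hξ' : (ξ : ℂ) ≠ 0 := ofReal_ne_zero.mpr hξ
  have hparts := fourierIntegralUnitInterval_derivative (p := legendre (n + 2) - legendre n)
    (by simp [legendre_eval_neg_one, pow_succ]) (by simp [legendre_eval_one]) ξ
  rw [derivative_sub, derivative_legendre_add_two, add_sub_cancel_left,
    fourierIntegralUnitInterval_C_mul, fourierIntegralUnitInterval_sub] at hparts
  field_simp
  push_cast at hparts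
  linear_combination -hparts

theorem fourier_legendre_scaling_recursion (j : ℕ) (hj : 1 ≤ j) (ξ : ℝ) (hξ : ξ ≠ 0) :
    fourierT (phi (j+1)) ξ
      = (Real.sqrt ((2*j+3) / (2*j-1)) : ℝ) * fourierT (phi (j-1)) ξ
      + (2 * (Real.sqrt ((2*j+1) * (2*j+3)) : ℝ) / (Complex.I * ξ)) * fourierT (phi j) ξ := by
  obtain ⟨n, rfl⟩ := Nat.exists_eq_add_of_le' hj
  rw [fourierT_phi, fourierT_phi, fourierT_phi, Nat.add_sub_cancel,
    fourierIntegralUnitInterval_legendre_add_two n hξ]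
  have hratio : Real.sqrt ((2 * n + 5) / (2 * n + 1)) * Real.sqrt (2 * n + 1)
      = Real.sqrt (2 * n + 5) := by
    rw [← Real.sqrt_mul' _ (by positivity), div_mul_cancel₀ _ (by positivity)]
  have hprod : Real.sqrt ((2 * n + 3) * (2 * n + 5)) * Real.sqrt (2 * n + 3)
      = (2 * n + 3) * Real.sqrt (2 * n + 5) := by
    rw [Real.sqrt_mul (by positivity), mul_right_comm, Real.mul_self_sqrt (by positivity)]
  rw [show 2 * ((n + 1 + 1 : ℕ) : ℝ) + 1 = 2 * n + 5 by push_cast; ring,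
    show (2 * ((n + 1 : ℕ) : ℝ) + 3) / (2 * ((n + 1 : ℕ) : ℝ) - 1)
      = (2 * n + 5) / (2 * n + 1) by push_cast; ring_nf,
    show 2 * ((n + 1 : ℕ) : ℝ) + 1 = 2 * n + 3 by push_cast; ring,
    show 2 * ((n + 1 : ℕ) : ℝ) + 3 = 2 * n + 5 by push_cast; ring]
  have hratioC := congrArg ofReal hratio
  have hprodC := congrArg ofReal hprod
  push_cast at hratioC hprodC ⊢
  linear_combination (-fourierIntegralUnitInterval (legendre n) ξ) * hratioC
    - 2 / (I * ξ) * fourierIntegralUnitInterval (legendre (n + 1)) ξ * hprodC
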